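/- Let I be a finite index set, let f : ℝⁿ → ℝ and −c_i : ℝⁿ → ℝ (i ∈ I) be convex and continuous, and let F⁰ = {x : c_i(x) > 0 for all i} be nonempty. Suppose (μ_k) is a sequence of positive reals with μ_k → 0, each x_k ∈ F⁰ is a global minimizer on F⁰ of P(x; μ_k) = f(x) − μ_k ∑_{i ∈ I} log(c_i(x)), and x_k converges to a point x̄. Then x̄ is feasible (c_i(x̄) ≥ 0 for all i) and f(x̄) = inf{f(y) : c_i(y) ≥ 0 for all i}; that is, x̄ solves the constrained problem. -/
import Mathlib


/-- Convex-case convergence of the barrier method: if `μ k → 0⁺`, each `x k` is a global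
minimizer on `F⁰` of the logarithmic barrier function with parameter `μ k`, and
`x k → x̄`, then `x̄` is feasible and solves the constrained problem. -/
theorem barrier_minimizers_converge_to_solution
    (n m : ℕ) (f : EuclideanSpace ℝ (Fin n) → ℝ)
    (c : Fin m → EuclideanSpace ℝ (Fin n) → ℝ)
    (hf : ConvexOn ℝ Set.univ f) (hfc : Continuous f)
    (hc : ∀ i, ConcaveOn ℝ Set.univ (c i)) (hcc : ∀ i, Continuous (c i))
    (F0 : Set (EuclideanSpace ℝ (Fin n)))
    (hF0 : F0 = {x | ∀ i, 0 < c i x})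
    (hne : F0.Nonempty)
    (μ : ℕ → ℝ) (hμpos : ∀ k, 0 < μ k)
    (hμlim : Filter.Tendsto μ Filter.atTop (nhds 0))
    (x : ℕ → EuclideanSpace ℝ (Fin n)) (hxF : ∀ k, x k ∈ F0)
    (hxmin : ∀ k, ∀ y ∈ F0,
      f (x k) - μ k * ∑ i, Real.log (c i (x k)) ≤ f y - μ k * ∑ i, Real.log (c i y))
    (xbar : EuclideanSpace ℝ (Fin n))
    (hxlim : Filter.Tendsto x Filter.atTop (nhds xbar)) :
    (∀ i, 0 ≤ c i xbar) ∧ f xbar = sInf (f '' {y | ∀ i, 0 ≤ c i y}) := by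
  subst hF0
  have hlimc : ∀ i, Filter.Tendsto (fun k => c i (x k)) Filter.atTop (nhds (c i xbar)) :=
    fun i => ((hcc i).tendsto xbar).comp hxlim
  have hfeas : ∀ i, 0 ≤ c i xbar := by
    intro i
    exact ge_of_tendsto' (hlimc i) (fun k => (hxF k i).le)
  have hflim : Filter.Tendsto (fun k => f (x k)) Filter.atTop (nhds (f xbar)) :=
    (hfc.tendsto xbar).comp hxlim
  -- Step 1: f x̄ ≤ f y for strictly feasible y
  have key0 : ∀ y, (∀ i, 0 < c i y) → f xbar ≤ f y := by
    intro y hy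
    set B : ℝ := ∑ i, Real.log (c i xbar + 1) with hB
    set L : ℝ := ∑ i, Real.log (c i y) with hL
    have hglim : Filter.Tendsto (fun k => f y + μ k * (B - L)) Filter.atTop (nhds (f y)) := by
      have := Filter.Tendsto.const_add (f y) (hμlim.mul_const (B - L))
      simpa using this
    refine le_of_tendsto_of_tendsto hflim hglim ?_
    have hev : ∀ᶠ k in Filter.atTop, ∀ i, c i (x k) ≤ c i xbar + 1 := by
      rw [Filter.eventually_all]
      intro i
      exact ((hlimc i).eventually_le_const (by linarith [hfeas i] : c i xbar < c i xbar + 1))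
    filter_upwards [hev] with k hk
    have hb : ∑ i, Real.log (c i (x k)) ≤ B := by
      rw [hB]
      apply Finset.sum_le_sum
      intro i _
      exact Real.log_le_log (hxF k i) (hk i)
    have h1 := hxmin k y hy
    have h2 : μ k * ∑ i, Real.log (c i (x k)) ≤ μ k * B :=
      mul_le_mul_of_nonneg_left hb (hμpos k).le
    linarith
  -- Step 2: f x̄ ≤ f y for all feasible y
  have key : ∀ y, (∀ i, 0 ≤ c i y) → f xbar ≤ f y := by
    intro y hy
    obtain ⟨z, hz⟩ := hne
    have h1 : ∀ t : ℝ, 0 < t → t ≤ 1 → f xbar ≤ f y + t * (f z - f y) := by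
      intro t ht ht1
      have hyt : ∀ i, 0 < c i ((1 - t) • y + t • z) := by
        intro i
        have hconc := (hc i).2 (Set.mem_univ y) (Set.mem_univ z)
          (by linarith : (0:ℝ) ≤ 1 - t) ht.le (by ring)
        have h' : (1 - t) * c i y + t * c i z ≤ c i ((1 - t) • y + t • z) := by
          simpa [smul_eq_mul] using hconc
        nlinarith [mul_nonneg (by linarith : (0:ℝ) ≤ 1 - t) (hy i), mul_pos ht (hz i)]
      have h2 := key0 _ hyt
      have h3 := hf.2 (Set.mem_univ y) (Set.mem_univ z)
        (by linarith : (0:ℝ) ≤ 1 - t) ht.le (by ring)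
      have h3' : f ((1 - t) • y + t • z) ≤ (1 - t) * f y + t * f z := by
        simpa [smul_eq_mul] using h3
      nlinarith
    have hseq : Filter.Tendsto (fun k : ℕ => f y + (1 / (k + 1 : ℝ)) * (f z - f y))
        Filter.atTop (nhds (f y)) := by
      have h0 : Filter.Tendsto (fun k : ℕ => 1 / (k + 1 : ℝ)) Filter.atTop (nhds 0) :=
        tendsto_one_div_add_atTop_nhds_zero_nat
      have := Filter.Tendsto.const_add (f y) (h0.mul_const (f z - f y))
      simpa using this
    refine ge_of_tendsto hseq ?_
    filter_upwards with k
    refine h1 _ (by positivity) ?_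
    rw [div_le_one (by positivity)]
    linarith [Nat.cast_nonneg (α := ℝ) k]
  -- conclude
  refine ⟨hfeas, ?_⟩
  have hmem : f xbar ∈ f '' {y | ∀ i, 0 ≤ c i y} := ⟨xbar, hfeas, rfl⟩
  have hlb : ∀ b ∈ f '' {y | ∀ i, 0 ≤ c i y}, f xbar ≤ b := by
    rintro b ⟨y, hy, rfl⟩
    exact key y hy
  exact le_antisymm (le_csInf ⟨f xbar, hmem⟩ hlb) (csInf_le ⟨f xbar, hlb⟩ hmem)
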